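/- Let DB be an uncertain database all of whose existential probabilities are nonnegative. Then for every sequence S ∈ DB and every pattern α, maxPr_S(α) ≤ maxPr(α); that is, the maximum occurrence probability of α in any single sequence of DB is bounded above by the product of per-step maximum probabilities over the successively projected databases. -/

import Mathlib

variable {I : Type*}

/-- An uncertain sequence: a finite list of (item, existential probability) pairs. -/
abbrev USeq (I : Type*) := List (I × ℝ)

/-- An uncertain database: a finite list of uncertain sequences. -/
abbrev UDB (I : Type*) := List (USeq I)

/-- `α` occurs in `S`: some sublist of `S` has item list `α`. -/
def Occurs (α : List I) (S : USeq I) : Prop :=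
  ∃ o : USeq I, o.Sublist S ∧ o.map Prod.fst = α

/-- Maximum occurrence probability of pattern `α` in `S`
(`0` if `α` has no occurrence in `S`; `1` for the empty pattern). -/
noncomputable def maxPrS [DecidableEq I] (α : List I) (S : USeq I) : ℝ :=
  (((S.sublists.filter fun o => decide (o.map Prod.fst = α)).map
      fun o => (o.map Prod.snd).prod).maximum).getD 0

/-- Greedy projection: `projSeq α S = some S'` iff `α` occurs in `S`, in which case `S'`
is the suffix of `S` strictly after the last matched position of the greedy (leftmost)
occurrence of `α` in `S`.  For the empty pattern it is `S` itself. -/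
def projSeq [DecidableEq I] : List I → USeq I → Option (USeq I)
  | [], S => some S
  | _ :: _, [] => none
  | i :: α, (x, _) :: rest =>
      if x = i then projSeq α rest else projSeq (i :: α) rest

/-- The projected database `DB|α`. -/
def projDB [DecidableEq I] (α : List I) (DB : UDB I) : UDB I :=
  DB.filterMap (projSeq α)

/-- `P̂_D(i)`: maximum probability of an entry with item `i` over all sequences of `D`
(`0` if `i` occurs in no sequence of `D`). -/
noncomputable def Phat [DecidableEq I] (D : UDB I) (i : I) : ℝ :=
  (((D.flatten.filter fun e => decide (e.1 = i)).map Prod.snd).maximum).getD 0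

/-- `maxPr(α)` relative to `DB`: the product of per-step maximum probabilities over the
successively projected databases. -/
noncomputable def maxPrDB [DecidableEq I] (DB : UDB I) (α : List I) : ℝ :=
  ∏ k : Fin α.length, Phat (projDB (α.take k.val) DB) (α.get k)

/-- Expected support of `α` in `DB`. -/
noncomputable def expSup [DecidableEq I] (DB : UDB I) (α : List I) : ℝ :=
  (DB.map fun S => maxPrS α S).sum

/-- `expSup^cap` of a nonempty pattern (junk value `0` on the empty pattern). -/
noncomputable def expSupCap [DecidableEq I] (DB : UDB I) (α : List I) : ℝ :=
  match α.getLast? with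
  | none => 0
  | some i =>
      maxPrDB DB α.dropLast *
        ((projDB α.dropLast DB).map fun S' => maxPrS [i] S').sum

/-- Number of sequences of `D` in which item `i` occurs. -/
def supCount [DecidableEq I] (D : UDB I) (i : I) : ℕ :=
  (D.filter fun S => decide (i ∈ S.map Prod.fst)).length

/-- `expSupport^top` of a nonempty pattern (junk value `0` on the empty pattern). -/
noncomputable def expSupTop [DecidableEq I] (DB : UDB I) (α : List I) : ℝ :=
  match α.getLast? with
  | none => 0
  | some i =>
      maxPrDB DB α.dropLast * Phat (projDB α.dropLast DB) i *
        (supCount (projDB α.dropLast DB) i : ℝ)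

/-- Item `i` occurs in some sequence of `D`. -/
def ItemOccursIn (D : UDB I) (i : I) : Prop :=
  ∃ S ∈ D, i ∈ S.map Prod.fst

/-- `sWeight`: average weight of the items of a pattern. -/
noncomputable def sWeight (w : I → ℝ) (α : List I) : ℝ :=
  (α.map w).sum / (α.length : ℝ)

/-- Maximum weight among the items of a pattern (`0` for the empty pattern). -/
noncomputable def mxWs (w : I → ℝ) (α : List I) : ℝ :=
  ((α.map w).maximum).getD 0

/-- Maximum weight among items occurring in some sequence of `D` (`0` if none). -/
noncomputable def mxWDB (w : I → ℝ) (D : UDB I) : ℝ :=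
  ((D.flatten.map fun e => w e.1).maximum).getD 0

/-- `wgt^cap`. -/
noncomputable def wgtCap [DecidableEq I] (DB : UDB I) (w : I → ℝ) (α : List I) : ℝ :=
  max (mxWDB w (projDB α.dropLast DB)) (mxWs w α)

/-- Weighted expected support. -/
noncomputable def WES [DecidableEq I] (DB : UDB I) (w : I → ℝ) (α : List I) : ℝ :=
  expSup DB α * sWeight w α

/-- `wExpSup^cap`. -/
noncomputable def wExpSupCap [DecidableEq I] (DB : UDB I) (w : I → ℝ) (α : List I) : ℝ :=
  expSupCap DB α * wgtCap DB w α


/-!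
Unfolding the product, `maxPr(i :: β) = P̂_DB(i) · maxPr_{DB|i}(β)`. An occurrence of `i :: β`
in `S` starts with an entry of item `i`, whose probability is at most `P̂_DB(i)`; since the
greedy match of `i` is no later than that entry, the rest of the occurrence is an occurrence
of `β` in `S|i ∈ DB|i`. Induction on the pattern, generalizing the database, finishes the
proof; nonnegativity is what lets the two bounds be multiplied.
-/

namespace List

variable {α : Type*} [LinearOrder α] {l : List α} {a c d : α}

theorem le_maximum_getD_of_mem (h : a ∈ l) (d : α) : a ≤ l.maximum.getD d := by
  cases hm : l.maximum with
  | bot => simp [maximum_eq_bot.1 hm] at h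
  | coe m => exact le_maximum_of_mem h hm

theorem maximum_getD_le (hd : d ≤ c) (h : ∀ a ∈ l, a ≤ c) : l.maximum.getD d ≤ c := by
  cases hm : l.maximum with
  | bot => exact hd
  | coe m => exact h m (maximum_mem hm)

theorem le_maximum_getD (hd : c ≤ d) (h : ∀ a ∈ l, c ≤ a) : c ≤ l.maximum.getD d := by
  cases hm : l.maximum with
  | bot => exact hd
  | coe m => exact h m (maximum_mem hm)

end List

section

variable [DecidableEq I]

theorem le_maxPrS {α : List I} {S o : USeq I} (hs : o.Sublist S) (hf : o.map Prod.fst = α) :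
    (o.map Prod.snd).prod ≤ maxPrS α S :=
  List.le_maximum_getD_of_mem (by simpa using ⟨o, ⟨hs, hf⟩, rfl⟩) 0

theorem maxPrS_le {α : List I} {S : USeq I} {c : ℝ} (hc : 0 ≤ c)
    (h : ∀ o : USeq I, o.Sublist S → o.map Prod.fst = α → (o.map Prod.snd).prod ≤ c) :
    maxPrS α S ≤ c := by
  refine List.maximum_getD_le hc fun a ha => ?_
  simp only [List.mem_map, List.mem_filter, List.mem_sublists, decide_eq_true_eq] at ha
  obtain ⟨o, ⟨hs, hf⟩, rfl⟩ := ha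
  exact h o hs hf

theorem le_Phat {D : UDB I} {S : USeq I} (hS : S ∈ D) {e : I × ℝ} (he : e ∈ S) :
    e.2 ≤ Phat D e.1 :=
  List.le_maximum_getD_of_mem
    (List.mem_map.2 ⟨e, List.mem_filter.2 ⟨List.mem_flatten.2 ⟨S, hS, he⟩, by simp⟩, rfl⟩) 0

theorem Phat_nonneg {D : UDB I} (hD : ∀ S ∈ D, ∀ e ∈ S, 0 ≤ e.2) (i : I) : 0 ≤ Phat D i := by
  refine List.le_maximum_getD le_rfl fun a ha => ?_
  simp only [List.mem_map, List.mem_filter, List.mem_flatten, decide_eq_true_eq] at ha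
  obtain ⟨e, ⟨⟨S, hS, he⟩, _⟩, rfl⟩ := ha
  exact hD S hS e he

theorem sublist_of_projSeq_eq_some {α : List I} {S S' : USeq I} (h : projSeq α S = some S') :
    S'.Sublist S := by
  induction S generalizing α with
  | nil => cases α <;> simp_all [projSeq]
  | cons e rest ih =>
    obtain ⟨x, q⟩ := e
    match α with
    | [] => simp_all [projSeq]
    | i :: γ =>
      simp only [projSeq] at h
      split_ifs at h <;> exact (ih h).cons _

theorem projSeq_cons (i : I) (γ : List I) (S : USeq I) :
    projSeq (i :: γ) S = (projSeq [i] S).bind (projSeq γ) := by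
  induction S with
  | nil => rfl
  | cons e rest ih =>
    obtain ⟨x, p⟩ := e
    by_cases h : x = i <;> simp [projSeq, h, ih]

theorem exists_projSeq_singleton_of_cons_sublist {i : I} {p : ℝ} {o S : USeq I}
    (hs : ((i, p) :: o).Sublist S) : ∃ S', projSeq [i] S = some S' ∧ o.Sublist S' := by
  induction S with
  | nil => simp at hs
  | cons e rest ih =>
    cases hs with
    | cons _ hs' =>
      obtain ⟨S', hS', ho⟩ := ih hs'
      obtain ⟨x, q⟩ := e
      by_cases hx : x = i
      · exact ⟨rest, by simp [projSeq, hx], ho.trans (sublist_of_projSeq_eq_some hS')⟩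
      · exact ⟨S', by simp [projSeq, hx, hS'], ho⟩
    | cons_cons _ hs' => exact ⟨rest, by simp [projSeq], hs'⟩

theorem projDB_nil (DB : UDB I) : projDB [] DB = DB := by
  simp [projDB, projSeq]

theorem projDB_cons (i : I) (γ : List I) (DB : UDB I) :
    projDB (i :: γ) DB = projDB γ (projDB [i] DB) := by
  simp only [projDB, List.filterMap_filterMap]
  exact congrArg (List.filterMap · DB) (funext (projSeq_cons i γ))

theorem projDB_nonneg {DB : UDB I} (hDB : ∀ S ∈ DB, ∀ e ∈ S, 0 ≤ e.2) (γ : List I) :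
    ∀ S' ∈ projDB γ DB, ∀ e ∈ S', 0 ≤ e.2 := by
  intro S' hS' e he
  obtain ⟨S, hS, hproj⟩ := List.mem_filterMap.1 hS'
  exact hDB S hS e ((sublist_of_projSeq_eq_some hproj).subset he)

theorem maxPrDB_nil (DB : UDB I) : maxPrDB DB [] = 1 := by
  simp [maxPrDB]

theorem maxPrDB_cons (DB : UDB I) (i : I) (β : List I) :
    maxPrDB DB (i :: β) = Phat DB i * maxPrDB (projDB [i] DB) β := by
  show ∏ k : Fin (β.length + 1), _ = _
  rw [Fin.prod_univ_succ]
  congr 1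
  · simp [projDB_nil]
  · refine Finset.prod_congr rfl fun k _ => ?_
    rw [Fin.val_succ, List.take_succ_cons, projDB_cons]
    rfl

theorem maxPrDB_nonneg {DB : UDB I} (hDB : ∀ S ∈ DB, ∀ e ∈ S, 0 ≤ e.2) (α : List I) :
    0 ≤ maxPrDB DB α :=
  Finset.prod_nonneg fun _ _ => Phat_nonneg (projDB_nonneg hDB _) _

theorem maxPrS_le_maxPrDB_of_mem (α : List I) {DB : UDB I}
    (hDB : ∀ S ∈ DB, ∀ e ∈ S, 0 ≤ e.2) {S : USeq I} (hS : S ∈ DB) :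
    maxPrS α S ≤ maxPrDB DB α := by
  induction α generalizing DB S with
  | nil =>
    rw [maxPrDB_nil]
    refine maxPrS_le zero_le_one fun o _ hf => ?_
    simp [List.map_eq_nil_iff.1 hf]
  | cons i β ih =>
    refine maxPrS_le (maxPrDB_nonneg hDB _) fun o hs hf => ?_
    obtain _ | ⟨⟨x, p⟩, o⟩ := o
    · simp at hf
    obtain ⟨rfl, hβ⟩ := List.cons_eq_cons.1 hf
    obtain ⟨S', hS', ho⟩ := exists_projSeq_singleton_of_cons_sublist hs
    have hp : 0 ≤ p := hDB S hS (x, p) (hs.subset List.mem_cons_self)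
    have hhead : p ≤ Phat DB x := le_Phat hS (hs.subset List.mem_cons_self)
    have htail : (o.map Prod.snd).prod ≤ maxPrDB (projDB [x] DB) β :=
      (le_maxPrS ho hβ).trans (ih (projDB_nonneg hDB [x]) (List.mem_filterMap.2 ⟨S, hS, hS'⟩))
    rw [maxPrDB_cons, List.map_cons, List.prod_cons]
    exact mul_le_mul_of_nonneg hhead htail hp (maxPrDB_nonneg (projDB_nonneg hDB _) β)

end

/-- If all probabilities of `DB` are nonnegative, then for every `S ∈ DB` and every
pattern `α`, `maxPr_S(α) ≤ maxPr(α)`. -/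
theorem maxPrS_le_maxPrDB [DecidableEq I]
    (DB : UDB I) (hp : ∀ S ∈ DB, ∀ e ∈ S, 0 ≤ e.2) :
    ∀ S ∈ DB, ∀ α : List I, maxPrS α S ≤ maxPrDB DB α :=
  fun _ hS α => maxPrS_le_maxPrDB_of_mem α hp hS
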